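/- arXiv:2402.10112 — 6 statements merged into one kernel-verified Lean document; each statement's English description precedes it below -/
import Mathlib

section
/- Let (X, 𝓕, μ) be a probability space, M a positive integer, 0 ≤ δ < 1, and let {U_i}_{i∈I} be a multicover of X with M layers and error δ. Then for every measurable set V ⊆ X there exists an index i ∈ I such that μ(U_i ∩ V) ≤ μ(U_i)·μ(V)/(1 − δ). -/
/-!
Integrating the layer bound `∑ᵢ 1_{U i} ≤ M` over `V` gives `∑ᵢ μ (U i ∩ V) ≤ M μ(V)`, while the
error bound gives `M μ(V) ≤ ∑ᵢ μ (U i) μ(V) / (1 - δ)`. Since `μ(V)` is finite, the termwise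
strict inequality `μ (U i) μ(V) / (1 - δ) < μ (U i ∩ V)` for every `i` would make the first sum
strictly larger than the second.
-/

open MeasureTheory
open scoped ENNReal

/-- A family `U i` of measurable sets in a probability space is a *multicover* with `M` layers
and error `δ` if the sum of the indicator functions is a.e. at most `M`, and the sum of the
measures is at least `(1 - δ) * M`. -/
def IsMulticover {X : Type*} [MeasurableSpace X] (μ : Measure X) {I : Type*}
    (U : I → Set X) (M : ℕ) (δ : ℝ) : Prop :=
  (∀ i, MeasurableSet (U i)) ∧
  (∀ᵐ x ∂μ, ∑' i, (U i).indicator (fun _ => (1 : ℝ≥0∞)) x ≤ (M : ℝ≥0∞)) ∧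
  ENNReal.ofReal ((1 - δ) * M) ≤ ∑' i, μ (U i)

theorem ENNReal.exists_le_of_tsum_le {I : Type*} [Nonempty I] {f g : I → ℝ≥0∞}
    (h : ∑' i, f i ≤ ∑' i, g i) (hf : ∑' i, f i ≠ ∞) : ∃ i, f i ≤ g i := by
  by_contra! hlt
  obtain ⟨i⟩ := ‹Nonempty I›
  have hg : ∑' i, g i ≠ ∞ := ne_top_of_le_ne_top hf (ENNReal.tsum_le_tsum fun i => (hlt i).le)
  exact (ENNReal.tsum_lt_tsum hg (fun i => (hlt i).le) (hlt i)).not_ge h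

theorem MeasureTheory.tsum_measure_le_of_ae_tsum_indicator_le {X I : Type*} [MeasurableSpace X]
    {μ : Measure X} {U : I → Set X} (hU : ∀ i, MeasurableSet (U i)) {M : ℝ≥0∞}
    (hM : ∀ᵐ x ∂μ, ∑' i, (U i).indicator (fun _ => (1 : ℝ≥0∞)) x ≤ M) :
    ∑' i, μ (U i) ≤ M * μ Set.univ := by
  rw [ENNReal.tsum_eq_iSup_sum]
  refine iSup_le fun s => ?_
  calc ∑ i ∈ s, μ (U i)
      = ∫⁻ x, ∑ i ∈ s, (U i).indicator (fun _ => (1 : ℝ≥0∞)) x ∂μ := by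
        rw [lintegral_finsetSum _ fun i _ => measurable_const.indicator (hU i)]
        exact Finset.sum_congr rfl fun i _ => (lintegral_indicator_one (hU i)).symm
    _ ≤ ∫⁻ _, M ∂μ := lintegral_mono_ae <| hM.mono fun x hx => (ENNReal.sum_le_tsum s).trans hx
    _ = M * μ Set.univ := lintegral_const M

namespace IsMulticover

variable {X I : Type*} [MeasurableSpace X] {μ : Measure X} {U : I → Set X} {M : ℕ} {δ : ℝ}

theorem tsum_measure_inter_le (hU : IsMulticover μ U M δ) (V : Set X) :
    ∑' i, μ (U i ∩ V) ≤ M * μ V := by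
  have hrestrict := tsum_measure_le_of_ae_tsum_indicator_le (μ := μ.restrict V) hU.1
    (ae_restrict_of_ae hU.2.1)
  simpa only [Measure.restrict_apply (hU.1 _), Measure.restrict_apply_univ] using hrestrict

theorem ofReal_mul_le_tsum_measure (hU : IsMulticover μ U M δ) (hδ : δ < 1) :
    ENNReal.ofReal (1 - δ) * M ≤ ∑' i, μ (U i) := by
  simpa only [ENNReal.ofReal_mul (sub_nonneg.2 hδ.le), ENNReal.ofReal_natCast] using hU.2.2

theorem nonempty (hU : IsMulticover μ U M δ) (hM : 0 < M) (hδ : δ < 1) : Nonempty I := by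
  by_contra! hI
  have hpos : 0 < ENNReal.ofReal (1 - δ) * M :=
    ENNReal.mul_pos (ENNReal.ofReal_pos.2 (sub_pos.2 hδ)).ne' (by exact_mod_cast hM.ne')
  simpa using hpos.trans_le (hU.ofReal_mul_le_tsum_measure hδ)

end IsMulticover

theorem exists_index_inter_le_general {X : Type*} [MeasurableSpace X] (μ : Measure X)
    [IsProbabilityMeasure μ] {I : Type*} (U : I → Set X) (M : ℕ) (hM : 0 < M)
    (δ : ℝ) (hδ1 : δ < 1) (hU : IsMulticover μ U M δ)
    (V : Set X) :
    ∃ i : I, μ (U i ∩ V) ≤ μ (U i) * μ V / ENNReal.ofReal (1 - δ) := by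
  have := hU.nonempty hM hδ1
  set c := ENNReal.ofReal (1 - δ)
  have hc : c ≠ 0 := (ENNReal.ofReal_pos.2 (sub_pos.2 hδ1)).ne'
  have hinter := hU.tsum_measure_inter_le V
  have hbound : (M : ℝ≥0∞) * μ V ≤ ∑' i, μ (U i) * μ V / c :=
    calc (M : ℝ≥0∞) * μ V = c * M * (μ V / c) := by
          rw [mul_comm c, mul_assoc, ENNReal.mul_div_cancel hc ENNReal.ofReal_ne_top]
      _ ≤ (∑' i, μ (U i)) * (μ V / c) := by gcongr; exact hU.ofReal_mul_le_tsum_measure hδ1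
      _ = ∑' i, μ (U i) * μ V / c := by simp only [mul_div_assoc, ENNReal.tsum_mul_right]
  exact ENNReal.exists_le_of_tsum_le (hinter.trans hbound)
    (ne_top_of_le_ne_top (ENNReal.mul_ne_top (ENNReal.natCast_ne_top M) (measure_ne_top μ V)) hinter)

/-- given a multicover `{U i}` with `M` layers and error `δ` of a probability
space, for every measurable `V` there is an index `i` with
`μ (U i ∩ V) ≤ μ (U i) * μ V / (1 - δ)`. -/
theorem exists_index_inter_le {X : Type*} [MeasurableSpace X] (μ : Measure X)
    [IsProbabilityMeasure μ] {I : Type*} (U : I → Set X) (M : ℕ) (hM : 0 < M)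
    (δ : ℝ) (hδ0 : 0 ≤ δ) (hδ1 : δ < 1) (hU : IsMulticover μ U M δ)
    (V : Set X) (hV : MeasurableSet V) :
    ∃ i : I, μ (U i ∩ V) ≤ μ (U i) * μ V / ENNReal.ofReal (1 - δ) :=
  exists_index_inter_le_general μ U M hM δ hδ1 hU V
end

section
/- Let (X, 𝓕, μ) be a probability space, M a positive integer, 0 ≤ δ < 1, and let {U_n}_{n∈ℕ} be a multicover of X with M layers and error δ. Then for every integer k > 0 there exists a subset J ⊆ ℕ such that (a) μ(⋃_{j∈J} U_j) ≥ (1 − δ)(1 − 1/k), and (b) ∑_{j∈J} μ(U_j) ≤ k. -/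
open MeasureTheory
open scoped ENNReal

/-!
Select the sets greedily: keep `U n` when at least a `1 / k`-th of its measure lies outside the
sets kept before it. The new parts of the kept sets are disjoint, so the kept measures sum to at
most `k`. A rejected `U n` has more than a `(1 - 1 / k)`-th of its measure inside the union `W` of
the kept sets, hence `(1 - 1 / k) (1 - δ) M ≤ ∑ μ (U n ∩ W) ≤ M μ W` by the bound on the layers.
-/

lemma ENNReal.natCast_sub_one_mul_add_le {a b : ℝ≥0∞} {k : ℕ} (hb : b ≠ ∞)
    (h : k * b ≤ a + b) : ((k - 1 : ℕ) : ℝ≥0∞) * (a + b) ≤ k * a := by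
  rcases k with _ | m
  · simp
  have hmb : (m : ℝ≥0∞) * b ≤ a := by
    rw [← ENNReal.add_le_add_iff_right hb]
    simpa [add_mul] using h
  calc ((m + 1 - 1 : ℕ) : ℝ≥0∞) * (a + b) = m * a + m * b := by simp [mul_add]
    _ ≤ m * a + a := by gcongr
    _ = (m + 1 : ℕ) * a := by push_cast; ring

namespace MeasureTheory

variable {X : Type*} [MeasurableSpace X] {μ : Measure X} {U : ℕ → Set X}

lemma tsum_measure_inter_le_of_ae_tsum_indicator_le {M : ℕ} (hU : ∀ n, MeasurableSet (U n))
    (hM : ∀ᵐ x ∂μ, ∑' n, (U n).indicator (fun _ => (1 : ℝ≥0∞)) x ≤ M) (W : Set X) :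
    ∑' n, μ (U n ∩ W) ≤ M * μ W :=
  calc ∑' n, μ (U n ∩ W)
      = ∑' n, ∫⁻ x, (U n).indicator (fun _ => (1 : ℝ≥0∞)) x ∂μ.restrict W := by
        simp_rw [lintegral_indicator_const (hU _), one_mul, Measure.restrict_apply (hU _)]
    _ = ∫⁻ x, ∑' n, (U n).indicator (fun _ => (1 : ℝ≥0∞)) x ∂μ.restrict W :=
        (lintegral_tsum fun n => (measurable_const.indicator (hU n)).aemeasurable).symm
    _ ≤ ∫⁻ _, (M : ℝ≥0∞) ∂μ.restrict W := lintegral_mono_ae (ae_restrict_of_ae hM)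
    _ = M * μ W := by rw [lintegral_const, Measure.restrict_apply_univ]

section Greedy

variable (μ U) (k : ℕ)

def greedyUnion : ℕ → Set X
  | 0 => ∅
  | n + 1 => if μ (U n) ≤ k * μ (U n \ greedyUnion n) then greedyUnion n ∪ U n else greedyUnion n

def greedyIndices : Set ℕ := {n | μ (U n) ≤ k * μ (U n \ greedyUnion μ U k n)}

variable {μ U k}

lemma greedyUnion_mono : Monotone (greedyUnion μ U k) := by
  refine monotone_nat_of_le_succ fun n => ?_
  rw [greedyUnion]
  split_ifs
  exacts [Set.subset_union_left, le_rfl]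

lemma measurableSet_greedyUnion (hU : ∀ n, MeasurableSet (U n)) (n : ℕ) :
    MeasurableSet (greedyUnion μ U k n) := by
  induction n with
  | zero => exact .empty
  | succ n ih =>
    rw [greedyUnion]
    split_ifs
    exacts [ih.union (hU n), ih]

lemma greedyUnion_succ_of_mem {n : ℕ} (hn : n ∈ greedyIndices μ U k) :
    greedyUnion μ U k (n + 1) = greedyUnion μ U k n ∪ U n :=
  if_pos hn

lemma subset_greedyUnion {i j : ℕ} (hi : i ∈ greedyIndices μ U k) (hij : i < j) :
    U i ⊆ greedyUnion μ U k j := by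
  refine subset_trans ?_ (greedyUnion_mono hij)
  rw [greedyUnion_succ_of_mem hi]
  exact Set.subset_union_right

lemma greedyUnion_subset (n : ℕ) :
    greedyUnion μ U k n ⊆ ⋃ j ∈ greedyIndices μ U k, U j := by
  induction n with
  | zero => exact Set.empty_subset _
  | succ n ih =>
    rw [greedyUnion]
    split_ifs with hn
    exacts [Set.union_subset ih (Set.subset_biUnion_of_mem hn), ih]

lemma pairwise_disjoint_diff_greedyUnion :
    Pairwise fun i j : greedyIndices μ U k =>
      Disjoint (U i \ greedyUnion μ U k i) (U j \ greedyUnion μ U k j) := by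
  suffices ∀ i j : greedyIndices μ U k, (i : ℕ) < j →
      Disjoint (U i \ greedyUnion μ U k i) (U j \ greedyUnion μ U k j) by
    intro i j hij
    rcases lt_or_gt_of_ne (Subtype.coe_injective.ne hij) with h | h
    exacts [this i j h, (this j i h).symm]
  intro i j hij
  exact Set.disjoint_left.mpr fun x hxi hxj => hxj.2 (subset_greedyUnion i.2 hij hxi.1)

lemma tsum_measure_greedyIndices_le (hU : ∀ n, MeasurableSet (U n)) :
    ∑' j : greedyIndices μ U k, μ (U j) ≤ k * μ (⋃ j ∈ greedyIndices μ U k, U j) :=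
  calc ∑' j : greedyIndices μ U k, μ (U j)
      ≤ ∑' j : greedyIndices μ U k, k * μ (U j \ greedyUnion μ U k j) :=
        ENNReal.tsum_le_tsum fun j => j.2
    _ = k * μ (⋃ j : greedyIndices μ U k, U j \ greedyUnion μ U k j) := by
        rw [ENNReal.tsum_mul_left, measure_iUnion pairwise_disjoint_diff_greedyUnion
          fun j => (hU j).diff (measurableSet_greedyUnion hU j)]
    _ ≤ k * μ (⋃ j ∈ greedyIndices μ U k, U j) := by
        gcongr
        exact Set.iUnion_subset fun j => Set.sdiff_subset.trans (Set.subset_biUnion_of_mem j.2)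

lemma mul_measure_diff_iUnion_greedyIndices_le (n : ℕ) :
    k * μ (U n \ ⋃ j ∈ greedyIndices μ U k, U j) ≤ μ (U n) := by
  by_cases hn : n ∈ greedyIndices μ U k
  · simp [Set.sdiff_eq_empty.mpr (Set.subset_biUnion_of_mem hn)]
  calc k * μ (U n \ ⋃ j ∈ greedyIndices μ U k, U j)
      ≤ k * μ (U n \ greedyUnion μ U k n) := by gcongr; exact greedyUnion_subset n
    _ ≤ μ (U n) := (not_le.mp hn).le

lemma natCast_sub_one_mul_measure_le_mul_measure_inter [IsFiniteMeasure μ]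
    (hU : ∀ n, MeasurableSet (U n)) (n : ℕ) :
    ((k - 1 : ℕ) : ℝ≥0∞) * μ (U n) ≤ k * μ (U n ∩ ⋃ j ∈ greedyIndices μ U k, U j) := by
  have hW : MeasurableSet (⋃ j ∈ greedyIndices μ U k, U j) :=
    .biUnion (Set.to_countable _) fun j _ => hU j
  have hdiff := mul_measure_diff_iUnion_greedyIndices_le (μ := μ) (U := U) (k := k) n
  rw [← measure_inter_add_sdiff (U n) hW] at hdiff ⊢
  exact ENNReal.natCast_sub_one_mul_add_le (measure_ne_top μ _) hdiff

end Greedy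

lemma IsMulticover.ofReal_mul_one_sub_inv_le_measure {M : ℕ} {δ : ℝ} {k : ℕ} {W : Set X}
    (hU : IsMulticover μ U M δ) (hM : 0 < M) (hk : 0 < k)
    (hW : ∀ n, ((k - 1 : ℕ) : ℝ≥0∞) * μ (U n) ≤ k * μ (U n ∩ W)) :
    ENNReal.ofReal ((1 - δ) * (1 - 1 / k)) ≤ μ W := by
  obtain ⟨hmeas, hae, hsum⟩ := hU
  have hkM : ((k * M : ℕ) : ℝ≥0∞) ≠ 0 := by positivity
  rw [← ENNReal.mul_le_mul_iff_left hkM (ENNReal.natCast_ne_top _)]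
  have hscale : (1 - δ) * (1 - 1 / k) * (k * M : ℕ) = (k - 1 : ℕ) * ((1 - δ) * M) := by
    rw [Nat.cast_pred hk]
    push_cast
    field_simp
  calc ENNReal.ofReal ((1 - δ) * (1 - 1 / k)) * (k * M : ℕ)
      = (k - 1 : ℕ) * ENNReal.ofReal ((1 - δ) * M) := by
        rw [← ENNReal.ofReal_natCast, ← ENNReal.ofReal_mul' (Nat.cast_nonneg _), hscale,
          ENNReal.ofReal_mul (Nat.cast_nonneg _), ENNReal.ofReal_natCast]
    _ ≤ (k - 1 : ℕ) * ∑' n, μ (U n) := by gcongr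
    _ = ∑' n, (k - 1 : ℕ) * μ (U n) := ENNReal.tsum_mul_left.symm
    _ ≤ ∑' n, k * μ (U n ∩ W) := ENNReal.tsum_le_tsum hW
    _ = k * ∑' n, μ (U n ∩ W) := ENNReal.tsum_mul_left
    _ ≤ k * (M * μ W) := by
        gcongr
        exact tsum_measure_inter_le_of_ae_tsum_indicator_le hmeas hae W
    _ = μ W * (k * M : ℕ) := by push_cast; ring

end MeasureTheory

theorem exists_subfamily_cover_general {X : Type*} [MeasurableSpace X] (μ : Measure X)
    [IsProbabilityMeasure μ] (U : ℕ → Set X) (M : ℕ) (hM : 0 < M)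
    (δ : ℝ) (hU : IsMulticover μ U M δ)
    (k : ℕ) (hk : 0 < k) :
    ∃ J : Set ℕ,
      ENNReal.ofReal ((1 - δ) * (1 - 1 / (k : ℝ))) ≤ μ (⋃ j ∈ J, U j) ∧
      ∑' j : J, μ (U j) ≤ (k : ℝ≥0∞) := by
  refine ⟨greedyIndices μ U k, ?_, ?_⟩
  · exact hU.ofReal_mul_one_sub_inv_le_measure hM hk
      (natCast_sub_one_mul_measure_le_mul_measure_inter hU.1)
  · calc ∑' j : greedyIndices μ U k, μ (U j)
        ≤ k * μ (⋃ j ∈ greedyIndices μ U k, U j) := tsum_measure_greedyIndices_le hU.1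
      _ ≤ k * 1 := by gcongr; exact prob_le_one
      _ = k := mul_one _

/-- from a countable multicover with error `δ` of a probability space one can
extract a subfamily covering at least `(1 - δ)(1 - 1/k)` of the space, the sum of whose
measures is at most `k`. -/
theorem exists_subfamily_cover {X : Type*} [MeasurableSpace X] (μ : Measure X)
    [IsProbabilityMeasure μ] (U : ℕ → Set X) (M : ℕ) (hM : 0 < M)
    (δ : ℝ) (hδ0 : 0 ≤ δ) (hδ1 : δ < 1) (hU : IsMulticover μ U M δ)
    (k : ℕ) (hk : 0 < k) :
    ∃ J : Set ℕ,
      ENNReal.ofReal ((1 - δ) * (1 - 1 / (k : ℝ))) ≤ μ (⋃ j ∈ J, U j) ∧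
      ∑' j : J, μ (U j) ≤ (k : ℝ≥0∞) :=
  exists_subfamily_cover_general μ U M hM δ hU k hk
end

section
/- Let (X, 𝓕, μ) be a probability space, M a positive integer, 0 ≤ δ < 1, and let {U_n}_{n∈ℕ} be a multicover of X with M layers and error δ. Then for every integer k > 0 there exists a finite subset J ⊆ ℕ such that (a) μ(⋃_{j∈J} U_j) ≥ (1 − δ)(1 − 1/k), and (b) ∑_{j∈J} μ(U_j) ≤ 2k. -/
/-!
Greedy selection. Call a finite subfamily `J` efficient if `∑_{j ∈ J} μ(U j) ≤ 2k μ(⋃_{j ∈ J} U j)`.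
Since almost every point lies in at most `M` of the sets while their total mass is at least
`(1 - δ) M`, a set `W` with `μ W ≤ t := (1 - δ)(1 - 1/k)` cannot contain all but a `1/(2k)`-fraction
of every `U j`: some `U j` satisfies `μ(U j) < 2k μ(U j \ W)`, and by the slack in this counting
such a `j` can already be found among the first `N` sets, for one `N` serving every `W`.
Among the efficient `J ⊆ {0, …, N - 1}` with `μ(⋃ J) ≤ t` take one of maximal coverage. Adding
such a `U j` to it keeps it efficient and enlarges its coverage, so the result covers more than `t`
at cost at most `2k t + 1 ≤ 2k`.
-/

open MeasureTheory
open scoped ENNReal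

namespace MeasureTheory

variable {X ι : Type*} [MeasurableSpace X] {μ : Measure X} {U : ι → Set X}

theorem tsum_measure_inter_le_mul [Countable ι] (hU : ∀ i, MeasurableSet (U i)) {m : ℝ≥0∞}
    (hm : ∀ᵐ x ∂μ, ∑' i, (U i).indicator (fun _ => (1 : ℝ≥0∞)) x ≤ m) (W : Set X) :
    ∑' i, μ (U i ∩ W) ≤ m * μ W :=
  calc ∑' i, μ (U i ∩ W)
      = ∫⁻ x, ∑' i, (U i).indicator (fun _ => (1 : ℝ≥0∞)) x ∂μ.restrict W := by
        rw [lintegral_tsum fun i => (measurable_const.indicator (hU i)).aemeasurable]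
        refine tsum_congr fun i => ?_
        rw [lintegral_indicator (hU i), setLIntegral_one, Measure.restrict_apply (hU i)]
    _ ≤ ∫⁻ _, m ∂μ.restrict W := lintegral_mono_ae (ae_restrict_of_ae hm)
    _ = m * μ W := by rw [lintegral_const, Measure.restrict_apply_univ]

theorem sum_measureReal_inter_le_mul [Countable ι] [IsFiniteMeasure μ]
    (hU : ∀ i, MeasurableSet (U i)) {M : ℕ}
    (hM : ∀ᵐ x ∂μ, ∑' i, (U i).indicator (fun _ => (1 : ℝ≥0∞)) x ≤ M) (s : Finset ι) (W : Set X) :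
    ∑ i ∈ s, μ.real (U i ∩ W) ≤ M * μ.real W := by
  have h := (ENNReal.sum_le_tsum s).trans (tsum_measure_inter_le_mul hU hM W)
  simpa [ENNReal.toReal_sum, Measure.real] using ENNReal.toReal_mono (by finiteness) h

theorem exists_measureReal_lt_mul_measureReal_sdiff [IsFiniteMeasure μ] {W : Set X}
    (hW : MeasurableSet W) {s : Finset ι} {a : ℝ}
    (h : a * ∑ i ∈ s, μ.real (U i ∩ W) + ∑ i ∈ s, μ.real (U i) < a * ∑ i ∈ s, μ.real (U i)) :
    ∃ i ∈ s, μ.real (U i) < a * μ.real (U i \ W) := by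
  by_contra! hle
  have hsplit : ∑ i ∈ s, μ.real (U i) =
      ∑ i ∈ s, μ.real (U i ∩ W) + ∑ i ∈ s, μ.real (U i \ W) := by
    rw [← Finset.sum_add_distrib]
    exact Finset.sum_congr rfl fun i _ => (measureReal_inter_add_sdiff hW).symm
  have hdiff := Finset.sum_le_sum hle
  rw [← Finset.mul_sum] at hdiff
  rw [hsplit, mul_add] at h
  linarith

theorem exists_lt_sum_range_measureReal [IsFiniteMeasure μ] {U : ℕ → Set X} {r : ℝ}
    (hr : ENNReal.ofReal r < ∑' i, μ (U i)) :
    ∃ N, r < ∑ i ∈ Finset.range N, μ.real (U i) := by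
  obtain ⟨N, hN⟩ := lt_iSup_iff.mp (ENNReal.tsum_eq_iSup_nat (f := fun i => μ (U i)) ▸ hr)
  refine ⟨N, ?_⟩
  have h := ENNReal.toReal_strict_mono (ENNReal.sum_ne_top.2 fun _ _ => measure_ne_top μ _) hN
  rw [ENNReal.toReal_sum fun _ _ => by finiteness, ENNReal.toReal_ofReal'] at h
  exact (le_max_left r 0).trans_lt h

theorem exists_finset_lt_measureReal_biUnion [IsProbabilityMeasure μ]
    (hU : ∀ i, MeasurableSet (U i)) (s : Finset ι) {a t : ℝ} (ha : 0 ≤ a) (ht : 0 ≤ t)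
    (hstep : ∀ J ⊆ s, μ.real (⋃ j ∈ J, U j) ≤ t →
      ∃ j ∈ s, μ.real (U j) < a * μ.real (U j \ ⋃ i ∈ J, U i)) :
    ∃ J ⊆ s, t < μ.real (⋃ j ∈ J, U j) ∧ ∑ j ∈ J, μ.real (U j) ≤ a * t + 1 := by
  classical
  set C := s.powerset.filter fun J =>
    ∑ j ∈ J, μ.real (U j) ≤ a * μ.real (⋃ j ∈ J, U j) ∧ μ.real (⋃ j ∈ J, U j) ≤ t
  have hC : ∅ ∈ C := by simp [C, ht]
  obtain ⟨J, hJC, hJmax⟩ := C.exists_max_image (fun J => μ.real (⋃ j ∈ J, U j)) ⟨∅, hC⟩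
  obtain ⟨hJs, hJcost, hJt⟩ : J ⊆ s ∧ _ ∧ _ := by simpa [C] using hJC
  obtain ⟨j, hjs, hj⟩ := hstep J hJs hJt
  set W := ⋃ i ∈ J, U i
  have hnew : 0 < μ.real (U j \ W) := by
    by_contra! h
    nlinarith [measureReal_nonneg (μ := μ) (s := U j \ W), measureReal_nonneg (μ := μ) (s := U j)]
  have hjJ : j ∉ J := fun hjJ => by
    rw [Set.sdiff_eq_empty.mpr (Finset.subset_set_biUnion_of_mem hjJ), measureReal_empty] at hnew
    exact hnew.false
  have hW : MeasurableSet W := J.measurableSet_biUnion fun i _ => hU i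
  have hcover : μ.real (⋃ i ∈ insert j J, U i) = μ.real W + μ.real (U j \ W) := by
    rw [Finset.set_biUnion_insert, Set.union_comm,
      measureReal_add_sdiff hW (measure_ne_top μ _) (measure_ne_top μ _)]
  have hcost : ∑ i ∈ insert j J, μ.real (U i) = μ.real (U j) + ∑ i ∈ J, μ.real (U i) :=
    Finset.sum_insert hjJ
  have hlarger : t < μ.real (⋃ i ∈ insert j J, U i) := by
    by_contra! hle
    have hmem : insert j J ∈ C := by
      simp only [C, Finset.mem_filter, Finset.mem_powerset]
      exact ⟨Finset.insert_subset hjs hJs, by rw [hcost, hcover]; nlinarith, hle⟩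
    linarith [hJmax _ hmem]
  refine ⟨insert j J, Finset.insert_subset hjs hJs, hlarger, ?_⟩
  rw [hcost]
  nlinarith [measureReal_le_one (μ := μ) (s := U j)]

end MeasureTheory

theorem IsMulticover.exists_lt_mul_measureReal_sdiff {X : Type*} [MeasurableSpace X]
    {μ : Measure X} [IsFiniteMeasure μ] {U : ℕ → Set X} {M : ℕ} {δ : ℝ}
    (hU : IsMulticover μ U M δ) (hM : 0 < M) {a t : ℝ} (ha : 1 < a) (ht : 0 ≤ t)
    (hat : a * t < (a - 1) * (1 - δ)) :
    ∃ N, ∀ W, MeasurableSet W → μ.real W ≤ t →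
      ∃ j ∈ Finset.range N, μ.real (U j) < a * μ.real (U j \ W) := by
  obtain ⟨hmeas, hmult, hmass⟩ := hU
  have hM1 : (1 : ℝ) ≤ M := by exact_mod_cast hM
  have hδ : 0 < 1 - δ := by nlinarith
  obtain ⟨N, hN⟩ : ∃ N, a * M * t / (a - 1) < ∑ i ∈ Finset.range N, μ.real (U i) := by
    refine exists_lt_sum_range_measureReal (hmass.trans_lt' ?_)
    rw [ENNReal.ofReal_lt_ofReal_iff (by positivity), div_lt_iff₀ (by linarith)]
    nlinarith
  rw [div_lt_iff₀ (by linarith)] at hN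
  refine ⟨N, fun W hW hWt => exists_measureReal_lt_mul_measureReal_sdiff hW ?_⟩
  have hinter : a * ∑ i ∈ Finset.range N, μ.real (U i ∩ W) ≤ a * M * t :=
    calc _ ≤ a * (M * μ.real W) := by
          gcongr; exact sum_measureReal_inter_le_mul hmeas hmult _ _
      _ ≤ a * M * t := by rw [mul_assoc]; gcongr
  linarith

/-- from a countable multicover with error `δ` of a probability space one can
extract a *finite* subfamily covering at least `(1 - δ)(1 - 1/k)` of the space, the sum of
whose measures is at most `2k`. -/
theorem exists_finite_subfamily_cover {X : Type*} [MeasurableSpace X] (μ : Measure X)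
    [IsProbabilityMeasure μ] (U : ℕ → Set X) (M : ℕ) (hM : 0 < M)
    (δ : ℝ) (hδ0 : 0 ≤ δ) (hδ1 : δ < 1) (hU : IsMulticover μ U M δ)
    (k : ℕ) (hk : 0 < k) :
    ∃ J : Finset ℕ,
      ENNReal.ofReal ((1 - δ) * (1 - 1 / (k : ℝ))) ≤ μ (⋃ j ∈ J, U j) ∧
      ∑ j ∈ J, μ (U j) ≤ (2 * k : ℝ≥0∞) := by
  set t := (1 - δ) * (1 - 1 / (k : ℝ))
  have hk1 : (1 : ℝ) ≤ k := by exact_mod_cast hk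
  have hkt : k * t = (1 - δ) * (k - 1) := by simp only [t]; field_simp
  have ht : 0 ≤ t := by nlinarith
  obtain ⟨N, hN⟩ := hU.exists_lt_mul_measureReal_sdiff hM (a := 2 * k) (by linarith) ht
    (by nlinarith)
  obtain ⟨J, -, hcover, hcost⟩ := exists_finset_lt_measureReal_biUnion hU.1 (Finset.range N)
    (by positivity) ht fun J _ hJ => hN _ (J.measurableSet_biUnion fun i _ => hU.1 i) hJ
  refine ⟨J, ENNReal.ofReal_le_of_le_toReal hcover.le, ?_⟩
  calc ∑ j ∈ J, μ (U j) = ENNReal.ofReal (∑ j ∈ J, μ.real (U j)) := by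
        rw [ENNReal.ofReal_sum_of_nonneg fun _ _ => measureReal_nonneg]
        exact Finset.sum_congr rfl fun j _ => (ofReal_measureReal (measure_ne_top μ _)).symm
    _ ≤ ENNReal.ofReal (2 * k) := ENNReal.ofReal_le_ofReal (by nlinarith)
    _ = 2 * k := by simp
end

section
/- Let (X, 𝓕, μ) be a measure space which is countably separated, i.e., there is a countable family 𝓒 ⊆ 𝓕 such that for any two distinct points x, y ∈ X there is C ∈ 𝓒 with x ∈ C and y ∉ C. If a countable group G acts measurably (each g ∈ G acting as a bi-measurable bijection of X) and pointwise freely on X, then the action is setwise free. -/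
open MeasureTheory
open scoped Pointwise

/-- An action of `G` on a measure space is *setwise free* if for every `g ≠ 1` and every
measurable set `A` of positive measure there is a positive-measure measurable `B ⊆ A` with
`μ (gB ∆ B) > 0`. -/
def SetwiseFree (G : Type*) {X : Type*} [Group G] [MulAction G X] [MeasurableSpace X]
    (μ : Measure X) : Prop :=
  ∀ g : G, g ≠ 1 → ∀ A : Set X, MeasurableSet A → 0 < μ A →
    ∃ B : Set X, B ⊆ A ∧ MeasurableSet B ∧ 0 < μ B ∧ 0 < μ (symmDiff (g • B) B)

/-- An action of `G` on a measure space is *pointwise free* if the set of points fixed by some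
non-identity element has measure zero. -/
def PointwiseFree (G : Type*) {X : Type*} [Group G] [MulAction G X] [MeasurableSpace X]
    (μ : Measure X) : Prop :=
  μ {x : X | ∃ g : G, g ≠ 1 ∧ g • x = x} = 0

/-! Almost every point is moved by `g ≠ 1`, and a point `x` with `g • x ≠ x` lies in some
`g⁻¹ C n \ C n`, a set disjoint from its `g`-translate. One of these sets meets `A` in positive
measure, and that piece `B` satisfies `μ (g • B ∆ B) ≥ μ B > 0`. -/

open Set
open scoped symmDiff

theorem Set.setOf_ne_subset_iUnion_preimage_diff {X ι : Type*} {f : X → X} {C : ι → Set X}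
    (hC : ∀ x y : X, x ≠ y → ∃ i, x ∈ C i ∧ y ∉ C i) :
    {x | f x ≠ x} ⊆ ⋃ i, f ⁻¹' C i \ C i := fun x hx ↦ by
  obtain ⟨i, hfx, hx⟩ := hC (f x) x hx
  exact mem_iUnion.2 ⟨i, hfx, hx⟩

theorem MeasureTheory.exists_measure_inter_pos_of_ae_mem_iUnion {X ι : Type*} [MeasurableSpace X]
    [Countable ι] {μ : Measure X} {s : Set X} {u : ι → Set X} (hs : 0 < μ s)
    (hu : ∀ᵐ x ∂μ, x ∈ ⋃ i, u i) : ∃ i, 0 < μ (s ∩ u i) := by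
  by_contra! h
  have hnull : μ (s ∩ ⋃ i, u i) = 0 := by
    rw [inter_iUnion]
    exact measure_iUnion_null fun i ↦ nonpos_iff_eq_zero.1 (h i)
  rw [measure_inter_conull (ae_iff.1 hu)] at hnull
  exact hs.ne' hnull

theorem MeasureTheory.measure_le_measure_symmDiff_of_disjoint {X : Type*} [MeasurableSpace X]
    {μ : Measure X} {s t : Set X} (h : Disjoint s t) : μ t ≤ μ (s ∆ t) := by
  rw [h.symmDiff_eq_sup]
  exact measure_mono le_sup_right

theorem setwiseFree_of_pointwiseFree_general {G X : Type*} [Group G] [MulAction G X]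
    [MeasurableSpace X] (μ : Measure X)
    (hmeas : ∀ g : G, Measurable fun x : X => g • x)
    (hsep : ∃ C : ℕ → Set X, (∀ n, MeasurableSet (C n)) ∧
      ∀ x y : X, x ≠ y → ∃ n, x ∈ C n ∧ y ∉ C n)
    (hfree : PointwiseFree G μ) :
    SetwiseFree G μ := by
  obtain ⟨C, hCmeas, hC⟩ := hsep
  intro g hg A hA hApos
  have hmoved : ∀ᵐ x ∂μ, g • x ≠ x :=
    ae_iff.2 (measure_mono_null (t := {x | ∃ g : G, g ≠ 1 ∧ g • x = x})
      (fun x hx ↦ ⟨g, hg, not_not.1 hx⟩) hfree)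
  set B : ℕ → Set X := fun n ↦ A ∩ ((g • ·) ⁻¹' C n \ C n)
  obtain ⟨n, hn⟩ : ∃ n, 0 < μ (B n) := exists_measure_inter_pos_of_ae_mem_iUnion hApos
    (hmoved.mono fun x hx ↦ setOf_ne_subset_iUnion_preimage_diff hC hx)
  have hdisj : Disjoint (g • B n) (B n) := by
    rw [Set.disjoint_left, ← image_smul]
    rintro _ ⟨x, hx, rfl⟩ hgx
    exact hgx.2.2 hx.2.1
  exact ⟨B n, inter_subset_left, hA.inter (((hCmeas n).preimage (hmeas g)).diff (hCmeas n)),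
    hn, hn.trans_le (measure_le_measure_symmDiff_of_disjoint hdisj)⟩

/-- a pointwise free measurable action of a countable group on a countably
separated measure space is setwise free. -/
theorem setwiseFree_of_pointwiseFree {G X : Type*} [Group G] [Countable G] [MulAction G X]
    [MeasurableSpace X] (μ : Measure X)
    (hmeas : ∀ g : G, Measurable fun x : X => g • x)
    (hsep : ∃ C : ℕ → Set X, (∀ n, MeasurableSet (C n)) ∧
      ∀ x y : X, x ≠ y → ∃ n, x ∈ C n ∧ y ∉ C n)
    (hfree : PointwiseFree G μ) :
    SetwiseFree G μ :=
  setwiseFree_of_pointwiseFree_general μ hmeas hsep hfree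
end

section
/- Let a group G act non-singularly and setwise freely on a measure space (X, 𝓕, μ). Then for every finite subset H ⊆ G and every A ∈ 𝓕 with μ(A) > 0, there exists a measurable set B ⊆ A with μ(B) > 0 which is an H-set, i.e., μ(hB ∩ h'B) = 0 for all distinct h, h' ∈ H. -/
open MeasureTheory
open scoped Pointwise

/-- A measurable action is *non-singular* if each group element acts measurably and
preserves nullity of measurable sets. -/
def NonSingularAction (G : Type*) {X : Type*} [Group G] [MulAction G X] [MeasurableSpace X]
    (μ : Measure X) : Prop :=
  (∀ g : G, Measurable fun x : X => g • x) ∧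
  ∀ (g : G) (A : Set X), MeasurableSet A → (μ A = 0 ↔ μ (g⁻¹ • A) = 0)

/-- A set `B` is an *`H`-set* if its images under distinct elements of `H` are almost
disjoint. -/
def IsHSet {G X : Type*} [Group G] [MulAction G X] [MeasurableSpace X]
    (μ : Measure X) (H : Set G) (B : Set X) : Prop :=
  ∀ h ∈ H, ∀ h' ∈ H, h ≠ h' → μ ((h • B) ∩ (h' • B)) = 0

/-! For `g ≠ 1`, setwise freeness gives `B ⊆ A` with `μ (gB \ B) > 0` or `μ (B \ gB) > 0`, and
then `B \ g⁻¹B` or `B \ gB` is a positive-measure subset of `A` disjoint from its `g`-translate.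
Shrinking `A` once for each `g ∈ H⁻¹H \ {1}` yields `B` with `B ∩ h⁻¹h'B = ∅` for `h ≠ h'` in `H`,
i.e. `hB ∩ h'B = ∅`. -/

section

variable {G X : Type*} [Group G] [MulAction G X] [MeasurableSpace X] {μ : Measure X}

namespace NonSingularAction

theorem measurableSet_smul_set (hns : NonSingularAction G μ) (g : G) {s : Set X}
    (hs : MeasurableSet s) : MeasurableSet (g • s) := by
  simpa only [Set.preimage_smul, inv_inv] using hns.1 g⁻¹ hs

theorem measure_smul_set_pos_iff (hns : NonSingularAction G μ) (g : G) {s : Set X}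
    (hs : MeasurableSet s) : 0 < μ (g • s) ↔ 0 < μ s := by
  simp only [pos_iff_ne_zero, ne_eq, hns.2 g _ (hns.measurableSet_smul_set g hs), inv_smul_smul]

end NonSingularAction

namespace SetwiseFree

theorem exists_subset_disjoint_smul (hns : NonSingularAction G μ) (hfree : SetwiseFree G μ)
    {g : G} (hg : g ≠ 1) {A : Set X} (hA : MeasurableSet A) (hApos : 0 < μ A) :
    ∃ C ⊆ A, MeasurableSet C ∧ 0 < μ C ∧ Disjoint (g • C) C := by
  obtain ⟨B, hBA, hB, -, hsd⟩ := hfree g hg A hA hApos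
  have hgB := hns.measurableSet_smul_set g hB
  rw [Set.symmDiff_def] at hsd
  rcases add_pos_iff.mp (hsd.trans_le (measure_union_le _ _)) with hpos | hpos
  -- `B \ g⁻¹B = g⁻¹ • (gB \ B)` has positive measure by non-singularity.
  · refine ⟨B \ g⁻¹ • B, Set.sdiff_subset.trans hBA,
      hB.diff (hns.measurableSet_smul_set g⁻¹ hB), ?_, ?_⟩
    · have hC : g⁻¹ • (g • B \ B) = B \ g⁻¹ • B := by
        rw [Set.smul_set_sdiff, inv_smul_smul]
      rwa [← hC, hns.measure_smul_set_pos_iff _ (hgB.diff hB)]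
    · rw [Set.smul_set_sdiff, smul_inv_smul]
      exact Set.disjoint_sdiff_left.mono_right Set.sdiff_subset
  · exact ⟨B \ g • B, Set.sdiff_subset.trans hBA, hB.diff hgB, hpos,
      Set.disjoint_sdiff_left.symm.mono_left (Set.smul_set_mono Set.sdiff_subset)⟩

theorem exists_subset_forall_disjoint_smul (hns : NonSingularAction G μ)
    (hfree : SetwiseFree G μ) (S : Finset G) {A : Set X} (hA : MeasurableSet A)
    (hApos : 0 < μ A) :
    ∃ B ⊆ A, MeasurableSet B ∧ 0 < μ B ∧ ∀ g ∈ S, g ≠ 1 → Disjoint (g • B) B := by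
  classical
  induction S using Finset.induction_on with
  | empty => exact ⟨A, subset_rfl, hA, hApos, by simp⟩
  | @insert a S _ ih =>
    obtain ⟨B, hBA, hB, hBpos, hBS⟩ := ih
    by_cases ha : a = 1
    · refine ⟨B, hBA, hB, hBpos, fun g hg hg1 => ?_⟩
      rcases Finset.mem_insert.mp hg with rfl | hg
      · exact absurd ha hg1
      · exact hBS g hg hg1
    obtain ⟨C, hCB, hC, hCpos, hCa⟩ := hfree.exists_subset_disjoint_smul hns ha hB hBpos
    refine ⟨C, hCB.trans hBA, hC, hCpos, fun g hg hg1 => ?_⟩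
    rcases Finset.mem_insert.mp hg with rfl | hg
    · exact hCa
    · exact (hBS g hg hg1).mono (Set.smul_set_mono hCB) hCB

end SetwiseFree

theorem isHSet_of_forall_disjoint_smul {H : Set G} {B : Set X}
    (hB : ∀ h ∈ H, ∀ h' ∈ H, h ≠ h' → Disjoint ((h⁻¹ * h') • B) B) : IsHSet μ H B := by
  intro h hh h' hh' hne
  have hdisj : Disjoint (h' • B) (h • B) := by
    rw [← Set.disjoint_smul_set (a := h⁻¹), inv_smul_smul, smul_smul]
    exact hB h hh h' hh' hne
  rw [Set.inter_comm, hdisj.inter_eq, measure_empty]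

end

/-- for a non-singular setwise free action, any measurable set of positive
measure contains a positive-measure `H`-set, for every finite `H ⊆ G`. -/
theorem exists_HSet_subset {G X : Type*} [Group G] [MulAction G X] [MeasurableSpace X]
    (μ : Measure X) (hns : NonSingularAction G μ) (hfree : SetwiseFree G μ)
    (H : Finset G) (A : Set X) (hA : MeasurableSet A) (hApos : 0 < μ A) :
    ∃ B : Set X, B ⊆ A ∧ MeasurableSet B ∧ 0 < μ B ∧ IsHSet μ (H : Set G) B := by
  classical
  obtain ⟨B, hBA, hB, hBpos, hdisj⟩ :=
    hfree.exists_subset_forall_disjoint_smul hns (H⁻¹ * H) hA hApos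
  refine ⟨B, hBA, hB, hBpos, isHSet_of_forall_disjoint_smul fun h hh h' hh' hne => ?_⟩
  exact hdisj _ (Finset.mul_mem_mul (Finset.inv_mem_inv hh) hh') fun h1 =>
    hne (inv_mul_eq_one.mp h1)
end

section
/- Let a group G act non-singularly and setwise freely on a probability space (X, 𝓕, μ), and let H ⊆ G be finite and nonempty. Then there exists a countable family (A_n)_{n∈ℕ} of H-sets which partitions X up to null sets, i.e., μ(A_n ∩ A_m) = 0 for n ≠ m and μ(X \ ⋃_n A_n) = 0. Moreover, the family {HA_n}_{n∈ℕ} (where HA_n = ⋃_{h∈H} hA_n) is a multicover of X with |H| layers and error 0. -/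
open MeasureTheory
open scoped Pointwise ENNReal

/-!
Let `S = H⁻¹H \ {1}`. A set `B` with `gB ∩ B = ∅` for all `g ∈ S` has pairwise disjoint
`H`-translates, and setwise freeness, applied once for each `g ∈ S`, shrinks any set of positive
measure to a set of positive measure with this property. A greedy exhaustion, taking at each stage
such a set of at least half the largest possible measure inside what is left, then produces
disjoint `H`-sets `A n` covering `X` up to a null set. Finally
`∑ₙ ν (H Aₙ) = ∑_{h ∈ H} ν (h ⋃ₙ Aₙ)` for every measure `ν`: for `ν = μ` every term on the right
is `1` by non-singularity, and for `ν` a Dirac mass every term is at most `1`, which bounds the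
number of layers.
-/

open Function

section Exhaustion

variable {X : Type*} [MeasurableSpace X] {μ : Measure X} [IsFiniteMeasure μ]
  {P : Set X → Prop}

lemma exists_subset_forall_measure_le_two_mul (hP : P ∅) (T : Set X) :
    ∃ B ⊆ T, MeasurableSet B ∧ P B ∧
      ∀ C ⊆ T, MeasurableSet C → P C → μ C ≤ 2 * μ B := by
  let m : ℝ≥0∞ := ⨆ C : {C : Set X // C ⊆ T ∧ MeasurableSet C ∧ P C}, μ C
  have le_m : ∀ C ⊆ T, MeasurableSet C → P C → μ C ≤ m := fun C hCT hC hPC =>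
    le_iSup (fun C : {C : Set X // C ⊆ T ∧ MeasurableSet C ∧ P C} => μ C) ⟨C, hCT, hC, hPC⟩
  by_cases hm : m = 0
  · refine ⟨∅, Set.empty_subset T, .empty, hP, fun C hCT hC hPC => ?_⟩
    simpa [hm] using le_m C hCT hC hPC
  have hm_top : m ≠ ∞ := ne_top_of_le_ne_top (measure_ne_top μ Set.univ)
    (iSup_le fun C => measure_mono (Set.subset_univ _))
  obtain ⟨⟨B, hBT, hB, hPB⟩, hmB⟩ := lt_iSup_iff.mp (ENNReal.half_lt_self hm hm_top)
  refine ⟨B, hBT, hB, hPB, fun C hCT hC hPC => ?_⟩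
  calc μ C ≤ m := le_m C hCT hC hPC
    _ = m / 2 + m / 2 := (ENNReal.add_halves m).symm
    _ ≤ 2 * μ B := by rw [two_mul]; exact add_le_add hmB.le hmB.le

theorem exists_pairwise_disjoint_ae_cover (hP : P ∅)
    (hdense : ∀ s, MeasurableSet s → 0 < μ s → ∃ t ⊆ s, MeasurableSet t ∧ P t ∧ 0 < μ t) :
    ∃ A : ℕ → Set X, (∀ n, MeasurableSet (A n)) ∧ (∀ n, P (A n)) ∧
      Pairwise (Disjoint on A) ∧ μ (⋃ n, A n)ᶜ = 0 := by
  choose F hF_sub hF_meas hF_P hF_ge using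
    exists_subset_forall_measure_le_two_mul (μ := μ) hP
  let W : ℕ → Set X := fun n => (fun w => w \ F w)^[n] Set.univ
  let A : ℕ → Set X := fun n => F (W n)
  have hW_succ : ∀ n, W (n + 1) = W n \ A n := fun n => Function.iterate_succ_apply' _ n _
  have hW_anti : Antitone W :=
    antitone_nat_of_succ_le fun n => (hW_succ n).symm ▸ Set.sdiff_subset
  have hA_disj : Pairwise (Disjoint on A) := (pairwise_disjoint_on A).mpr fun n m hnm =>
    Set.disjoint_right.mpr fun x hx =>
      ((hW_succ n ▸ hW_anti (Nat.succ_le_of_lt hnm)) (hF_sub (W m) hx)).2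
  have hA_meas : ∀ n, MeasurableSet (A n) := fun n => hF_meas (W n)
  set R := (⋃ n, A n)ᶜ
  have hR_sub : ∀ n, R ⊆ W n := by
    intro n
    induction n with
    | zero => exact Set.subset_univ R
    | succ n ih =>
      rw [hW_succ]
      exact Set.subset_sdiff.mpr
        ⟨ih, Set.disjoint_compl_left_iff_subset.mpr (Set.subset_iUnion A n)⟩
  refine ⟨A, hA_meas, fun n => hF_P (W n), hA_disj, ?_⟩
  by_contra hR
  obtain ⟨C, hCR, hC, hPC, hC_pos⟩ :=
    hdense R (MeasurableSet.iUnion hA_meas).compl (pos_iff_ne_zero.mpr hR)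
  -- `C` fits into every remainder, so it is at most twice as large as every `A n`.
  have : ∞ ≤ 2 * μ (⋃ n, A n) :=
    calc ∞ = ∑' _ : ℕ, μ C := (ENNReal.tsum_const_eq_top_of_ne_zero hC_pos.ne').symm
      _ ≤ ∑' n, 2 * μ (A n) :=
        ENNReal.tsum_le_tsum fun n => hF_ge (W n) C (hCR.trans (hR_sub n)) hC hPC
      _ = 2 * μ (⋃ n, A n) := by rw [ENNReal.tsum_mul_left, measure_iUnion hA_disj hA_meas]
  exact ENNReal.mul_ne_top ENNReal.ofNat_ne_top (measure_ne_top μ _) (top_le_iff.mp this)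

end Exhaustion

namespace NonSingularAction

variable {G X : Type*} [Group G] [MulAction G X] [MeasurableSpace X] {μ : Measure X}

lemma measurableSet_smul (hns : NonSingularAction G μ) (g : G) {B : Set X}
    (hB : MeasurableSet B) : MeasurableSet (g • B) :=
  Set.preimage_smul_inv g B ▸ hns.1 g⁻¹ hB

lemma measure_smul_eq_zero_iff (hns : NonSingularAction G μ) (g : G) {B : Set X}
    (hB : MeasurableSet B) : μ (g • B) = 0 ↔ μ B = 0 := by
  simpa using (hns.2 g⁻¹ B hB).symm

lemma exists_subset_disjoint_smul (hns : NonSingularAction G μ) (hfree : SetwiseFree G μ)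
    {g : G} (hg : g ≠ 1) {A : Set X} (hA : MeasurableSet A) (hA_pos : 0 < μ A) :
    ∃ C ⊆ A, MeasurableSet C ∧ 0 < μ C ∧ Disjoint (g • C) C := by
  obtain ⟨B, hBA, hB, -, hB_symmDiff⟩ := hfree g hg A hA hA_pos
  have sdiff_disjoint : ∀ k : G, Disjoint (k • (B \ k • B)) (B \ k • B) := fun k =>
    disjoint_sdiff_self_right.mono_left (Set.smul_set_mono Set.sdiff_subset)
  rw [Set.symmDiff_def, pos_iff_ne_zero, Ne, measure_union_null_iff, not_and_or] at hB_symmDiff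
  rcases hB_symmDiff with hpos | hpos
  · -- `g⁻¹ • (gB \ B) = B \ g⁻¹B`, and disjointness from the `g⁻¹`-translate is symmetric
    have hC : MeasurableSet (B \ g⁻¹ • B) := hB.diff (hns.measurableSet_smul _ hB)
    refine ⟨B \ g⁻¹ • B, Set.sdiff_subset.trans hBA, hC, ?_, ?_⟩
    · rwa [pos_iff_ne_zero, Ne, ← hns.measure_smul_eq_zero_iff g hC, Set.smul_set_sdiff,
        smul_inv_smul]
    · have := Set.disjoint_smul_set (a := g).mpr (sdiff_disjoint g⁻¹)
      rwa [smul_inv_smul, disjoint_comm] at this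
  · exact ⟨B \ g • B, Set.sdiff_subset.trans hBA, hB.diff (hns.measurableSet_smul g hB),
      pos_iff_ne_zero.mpr hpos, sdiff_disjoint g⟩

lemma exists_subset_forall_disjoint_smul (hns : NonSingularAction G μ)
    (hfree : SetwiseFree G μ) (S : Finset G) (hS : ∀ g ∈ S, g ≠ 1) {A : Set X}
    (hA : MeasurableSet A) (hA_pos : 0 < μ A) :
    ∃ C ⊆ A, MeasurableSet C ∧ 0 < μ C ∧ ∀ g ∈ S, Disjoint (g • C) C := by
  classical
  induction S using Finset.induction_on with
  | empty => exact ⟨A, subset_rfl, hA, hA_pos, by simp⟩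
  | insert g S _ ih =>
    obtain ⟨B, hBA, hB, hB_pos, hB_disj⟩ :=
      ih fun g' hg' => hS g' (Finset.mem_insert_of_mem hg')
    obtain ⟨C, hCB, hC, hC_pos, hC_disj⟩ :=
      hns.exists_subset_disjoint_smul hfree (hS g (Finset.mem_insert_self g S)) hB hB_pos
    refine ⟨C, hCB.trans hBA, hC, hC_pos, fun g' hg' => ?_⟩
    rcases Finset.mem_insert.mp hg' with rfl | hg'
    · exact hC_disj
    · exact (hB_disj g' hg').mono (Set.smul_set_mono hCB) hCB

lemma exists_subset_pairwiseDisjoint_smul (hns : NonSingularAction G μ)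
    (hfree : SetwiseFree G μ) (H : Finset G) {A : Set X} (hA : MeasurableSet A)
    (hA_pos : 0 < μ A) :
    ∃ C ⊆ A, MeasurableSet C ∧ (H : Set G).PairwiseDisjoint (· • C) ∧ 0 < μ C := by
  classical
  obtain ⟨C, hCA, hC, hC_pos, hC_disj⟩ := hns.exists_subset_forall_disjoint_smul hfree
    ((H⁻¹ * H).erase 1) (fun g hg => Finset.ne_of_mem_erase hg) hA hA_pos
  refine ⟨C, hCA, hC, fun h hh h' hh' hne => ?_, hC_pos⟩
  have hmem : h⁻¹ * h' ∈ (H⁻¹ * H).erase 1 :=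
    Finset.mem_erase.mpr ⟨by rwa [Ne, inv_mul_eq_one], Finset.mul_mem_mul
      (Finset.inv_mem_inv hh) hh'⟩
  have := Set.disjoint_smul_set (a := h).mpr (hC_disj _ hmem).symm
  rwa [smul_smul, mul_inv_cancel_left] at this

end NonSingularAction

lemma tsum_measure_biUnion_smul {G X : Type*} [Group G] [MulAction G X] [MeasurableSpace X]
    (ν : Measure X) (H : Finset G) {A : ℕ → Set X}
    (hA : ∀ h ∈ H, ∀ n, MeasurableSet (h • A n))
    (hA_disj : Pairwise (Disjoint on A)) (hH : ∀ n, (H : Set G).PairwiseDisjoint (· • A n)) :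
    ∑' n, ν (⋃ h ∈ H, h • A n) = ∑ h ∈ H, ν (h • ⋃ n, A n) :=
  calc ∑' n, ν (⋃ h ∈ H, h • A n) = ∑' n, ∑ h ∈ H, ν (h • A n) :=
        tsum_congr fun n => measure_biUnion_finset (hH n) fun h hh => hA h hh n
    _ = ∑ h ∈ H, ∑' n, ν (h • A n) := Summable.tsum_finsetSum fun _ _ => ENNReal.summable
    _ = ∑ h ∈ H, ν (h • ⋃ n, A n) := Finset.sum_congr rfl fun h hh => by
        rw [Set.smul_set_iUnion, measure_iUnion
          (fun n m hnm => Set.disjoint_smul_set.mpr (hA_disj hnm)) (hA h hh)]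

theorem exists_partition_into_HSets_general {G X : Type*} [Group G] [MulAction G X]
    [MeasurableSpace X] (μ : Measure X) [IsProbabilityMeasure μ]
    (hns : NonSingularAction G μ) (hfree : SetwiseFree G μ)
    (H : Finset G) :
    ∃ A : ℕ → Set X,
      (∀ n, MeasurableSet (A n)) ∧
      (∀ n, IsHSet μ (H : Set G) (A n)) ∧
      (∀ n m, n ≠ m → μ (A n ∩ A m) = 0) ∧
      μ (Set.univ \ ⋃ n, A n) = 0 ∧
      IsMulticover μ (fun n => ⋃ h ∈ H, h • A n) H.card 0 := by
  obtain ⟨A, hA, hA_H, hA_disj, hA_cover⟩ := exists_pairwise_disjoint_ae_cover (μ := μ)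
    (P := fun C => (H : Set G).PairwiseDisjoint (· • C)) (fun _ _ _ _ _ => by simp [onFun])
    fun _ hs hs_pos => hns.exists_subset_pairwiseDisjoint_smul hfree H hs hs_pos
  have hHA : ∀ h ∈ H, ∀ n, MeasurableSet (h • A n) := fun h _ n =>
    hns.measurableSet_smul h (hA n)
  have hHA_union : ∀ n, MeasurableSet (⋃ h ∈ H, h • A n) := fun n =>
    H.measurableSet_biUnion fun h hh => hHA h hh n
  have hfull : ∀ h : G, μ (h • ⋃ n, A n) = 1 := fun h => by
    have hU := MeasurableSet.iUnion hA
    rw [← prob_compl_eq_zero_iff (hns.measurableSet_smul h hU), ← Set.smul_set_compl,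
      hns.measure_smul_eq_zero_iff h hU.compl, hA_cover]
  refine ⟨A, hA, fun n h hh h' hh' hne => ?_, fun n m hnm => ?_,
    by rwa [← Set.compl_eq_univ_sdiff], hHA_union, Filter.Eventually.of_forall fun x => ?_, ?_⟩
  · rw [(hA_H n hh hh' hne).inter_eq, measure_empty]
  · rw [(hA_disj hnm).inter_eq, measure_empty]
  · simp_rw [← Pi.one_def, ← Measure.dirac_apply' x (hHA_union _),
      tsum_measure_biUnion_smul _ H hHA hA_disj hA_H]
    simpa using Finset.sum_le_sum fun h (_ : h ∈ H) => prob_le_one (μ := Measure.dirac x)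
  · simp [tsum_measure_biUnion_smul μ H hHA hA_disj hA_H, hfull]

/-- for a non-singular setwise free action on a probability space and a finite
nonempty `H ⊆ G`, there is a countable partition of `X` (up to null sets) into `H`-sets `A n`,
and the towers `H • A n` form a multicover with `|H|` layers and error `0`. -/
theorem exists_partition_into_HSets {G X : Type*} [Group G] [MulAction G X]
    [MeasurableSpace X] (μ : Measure X) [IsProbabilityMeasure μ]
    (hns : NonSingularAction G μ) (hfree : SetwiseFree G μ)
    (H : Finset G) (hH : H.Nonempty) :
    ∃ A : ℕ → Set X,
      (∀ n, MeasurableSet (A n)) ∧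
      (∀ n, IsHSet μ (H : Set G) (A n)) ∧
      (∀ n m, n ≠ m → μ (A n ∩ A m) = 0) ∧
      μ (Set.univ \ ⋃ n, A n) = 0 ∧
      IsMulticover μ (fun n => ⋃ h ∈ H, h • A n) H.card 0 :=
  exists_partition_into_HSets_general μ hns hfree H
end
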